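/- For any approximating function ψ and any s with 0 < s ≤ 1, the s-dimensional Hausdorff measure of S×₂(ψ) ∩ [0,1]² is infinite. -/

import Mathlib

/-!
Every vertical segment `{r} × [0, 1]` with `r` rational lies in `S×₂(ψ)`: along the multiples `q`
of the denominator of `r` one has `‖q r‖ = 0`, so the product is `0 < ψ q`. For `s ≤ 1` each
segment has positive `ℋ^s`-measure (it carries one-dimensional Lebesgue measure), and the square
contains infinitely many disjoint such segments.
-/

open MeasureTheory ENNReal

/-- Distance from a real number to the nearest integer. -/
noncomputable def distNearestInt (x : ℝ) : ℝ := |x - round x|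

/-- The set of multiplicatively `ψ`-approximable points in the plane
(homogeneous case). -/
def multApprox2 (ψ : ℕ → ℝ) : Set (ℝ × ℝ) :=
  {x : ℝ × ℝ |
    {q : ℕ | 0 < q ∧
      distNearestInt (q * x.1) * distNearestInt (q * x.2) < ψ q}.Infinite}

open Set

lemma distNearestInt_intCast (n : ℤ) : distNearestInt n = 0 := by
  simp [distNearestInt]

lemma singleton_prod_univ_subset_multApprox2 {ψ : ℕ → ℝ} (hψ : ∀ q, 0 < ψ q) (r : ℚ) :
    {(r : ℝ)} ×ˢ (univ : Set ℝ) ⊆ multApprox2 ψ := by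
  rintro ⟨x, y⟩ ⟨rfl : x = r, -⟩
  refine infinite_of_injective_forall_mem (f := fun k : ℕ => r.den * (k + 1))
    (fun a b hab => by simpa using hab) fun k => ⟨by positivity, ?_⟩
  have hmul : ((r.den * (k + 1) : ℕ) : ℝ) * r = ((r.num * (k + 1) : ℤ) : ℝ) := by
    push_cast
    rw [mul_right_comm, ← Rat.cast_natCast, ← Rat.cast_mul, Rat.den_mul_eq_num, Rat.cast_intCast]
  simpa only [hmul, distNearestInt_intCast, zero_mul] using hψ _

lemma isometry_prodMk_left {X Y : Type*} [PseudoEMetricSpace X] [PseudoEMetricSpace Y] (a : X) :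
    Isometry (Prod.mk a : Y → X × Y) := fun y z => by
  simp [Prod.edist_eq]

lemma hausdorffMeasure_singleton_prod {X Y : Type*} [EMetricSpace X] [EMetricSpace Y]
    [MeasurableSpace (X × Y)] [BorelSpace (X × Y)] [MeasurableSpace Y] [BorelSpace Y]
    {d : ℝ} (hd : 0 ≤ d) (a : X) (t : Set Y) : μH[d] ({a} ×ˢ t) = μH[d] t := by
  rw [singleton_prod, (isometry_prodMk_left a).hausdorffMeasure_image (Or.inl hd)]

lemma hausdorffMeasure_Icc_ne_zero {d : ℝ} (hd : d ≤ 1) {a b : ℝ} (hab : a < b) :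
    μH[d] (Icc a b) ≠ 0 := by
  have hvol : μH[1] (Icc a b) ≠ 0 := by
    simp [hausdorffMeasure_real, Real.volume_Icc, hab]
  exact fun h => hvol (nonpos_iff_eq_zero.1 (h ▸ Measure.hausdorffMeasure_mono hd _))

lemma measure_eq_top_of_disjoint_subsets {α : Type*} [MeasurableSpace α] {μ : Measure α}
    {S : Set α} {t : ℕ → Set α} {c : ℝ≥0∞} (hc : c ≠ 0) (hμ : ∀ n, μ (t n) = c)
    (hmeas : ∀ n, NullMeasurableSet (t n) μ) (hdisj : Pairwise (Function.onFun Disjoint t))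
    (hsub : ∀ n, t n ⊆ S) : μ S = ∞ := by
  have hunion : μ (⋃ n, t n) = ∞ := by
    rw [measure_iUnion₀ (hdisj.mono fun _ _ h => h.aedisjoint) hmeas]
    simp only [hμ, ENNReal.tsum_const_eq_top_of_ne_zero hc]
  exact top_le_iff.1 (hunion ▸ measure_mono (iUnion_subset hsub))

theorem mult_small_s_infinite_general (ψ : ℕ → ℝ) (hψpos : ∀ q, 0 < ψ q)
    (s : ℝ) (hs₁ : 0 < s) (hs₂ : s ≤ 1) :
    μH[s] (multApprox2 ψ ∩ Set.Icc (0, 0) (1, 1)) = ∞ := by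
  set r : ℕ → ℚ := fun n => ((n : ℚ) + 1)⁻¹
  have hr_mem (n : ℕ) : (r n : ℝ) ∈ Icc (0 : ℝ) 1 := by
    simp only [r, Rat.cast_inv, Rat.cast_add, Rat.cast_natCast, Rat.cast_one]
    exact ⟨by positivity, inv_le_one_of_one_le₀ (by simp)⟩
  have hr_inj : Function.Injective fun n => (r n : ℝ) :=
    Rat.cast_injective.comp fun m n h => by simpa [r] using h
  have hsub (n : ℕ) : {(r n : ℝ)} ×ˢ Icc (0 : ℝ) 1 ⊆ multApprox2 ψ ∩ Icc (0, 0) (1, 1) := by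
    rw [← Icc_prod_Icc]
    exact subset_inter
      ((prod_mono_right (subset_univ _)).trans (singleton_prod_univ_subset_multApprox2 hψpos _))
      (prod_mono_left (singleton_subset_iff.2 (hr_mem n)))
  exact measure_eq_top_of_disjoint_subsets (hausdorffMeasure_Icc_ne_zero hs₂ zero_lt_one)
    (fun n => hausdorffMeasure_singleton_prod hs₁.le _ _)
    (fun n => ((measurableSet_singleton _).prod measurableSet_Icc).nullMeasurableSet)
    (fun m n hmn => disjoint_prod.2 (Or.inl (disjoint_singleton.2 (hr_inj.ne hmn)))) hsub

theorem mult_small_s_infinite (ψ : ℕ → ℝ) (hψpos : ∀ q, 0 < ψ q) (hψmono : Antitone ψ)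
    (s : ℝ) (hs₁ : 0 < s) (hs₂ : s ≤ 1) :
    μH[s] (multApprox2 ψ ∩ Set.Icc (0, 0) (1, 1)) = ∞ :=
  mult_small_s_infinite_general ψ hψpos s hs₁ hs₂
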